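/- (Nuclear-norm cone inequality.) Let M be an m×n real matrix of rank r, let the columns of U ∈ ℝ^{m×r} form an orthonormal basis for the column space of M and the columns of V ∈ ℝ^{n×r} form an orthonormal basis for the row space of M, and let T ⊆ ℝ^{m×n} be the subspace spanned by all matrices of the form UA (A ∈ ℝ^{r×n}) and BVᵀ (B ∈ ℝ^{m×r}), with P_T and P_{T⊥} the orthogonal projections (with respect to the trace inner product) onto T and its orthogonal complement. If H is an m×n matrix with ‖M + H‖_* ≤ ‖M‖_*, then ‖P_{T⊥}(H)‖_* ≤ ‖P_T(H)‖_*, and consequently ‖H‖_* ≤ 2√(2r)·‖H‖_F. -/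

import Mathlib

open MeasureTheory ProbabilityTheory Real Matrix

/-- Frobenius norm of a real matrix. -/
noncomputable def frobNorm {m n : ℕ} (A : Matrix (Fin m) (Fin n) ℝ) : ℝ :=
  Real.sqrt (∑ i, ∑ j, (A i j)^2)

/-- The positive semidefinite square root (the removed `Matrix.PosSemidef.sqrt`, old definition). -/
noncomputable def psdSqrt {n : ℕ} {M : Matrix (Fin n) (Fin n) ℝ} (hA : M.PosSemidef) :
    Matrix (Fin n) (Fin n) ℝ :=
  hA.1.eigenvectorUnitary.1 * diagonal ((↑) ∘ (√·) ∘ hA.1.eigenvalues) *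
    (star hA.1.eigenvectorUnitary : Matrix (Fin n) (Fin n) ℝ)

/-- Nuclear norm: trace of the psd square root of Aᵀ * A. -/
noncomputable def nucNorm {m n : ℕ} (A : Matrix (Fin m) (Fin n) ℝ) : ℝ :=
  (psdSqrt (Matrix.posSemidef_conjTranspose_mul_self A)).trace

/-!
The nuclear norm is dual to the operator norm: `tr (Qᵀ A) ≤ ‖A‖_*` for every contraction `Q`, with
equality for the polar factor of `A`. This gives the triangle inequality, and additivity
`‖A + B‖_* = ‖A‖_* + ‖B‖_*` when `Aᵀ B = 0` and `A Bᵀ = 0`, because the polar factors of `A` and `B`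
then add up to a contraction.

Write `H = G + Z` with `G = P_T H`. Orthogonality to `T` forces `Uᵀ Z = 0` and `Z V = 0`, hence
`Mᵀ Z = 0` and `M Zᵀ = 0`, so `‖M‖_* + ‖Z‖_* = ‖M + Z‖_* ≤ ‖M + H‖_* + ‖G‖_* ≤ ‖M‖_* + ‖G‖_*`.
Finally `G = U A + B Vᵀ` has rank at most `2r`, so by Cauchy–Schwarz on the singular values
`‖H‖_* ≤ 2 ‖G‖_* ≤ 2 √(2r) ‖G‖_F ≤ 2 √(2r) ‖H‖_F`.
-/

section Contraction

variable {ι κ : Type*} [Fintype ι] [Fintype κ]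

theorem dotProduct_le_sqrt_mul_sqrt (x y : ι → ℝ) : x ⬝ᵥ y ≤ √(x ⬝ᵥ x) * √(y ⬝ᵥ y) := by
  simpa [dotProduct, sq] using Real.sum_mul_le_sqrt_mul_sqrt Finset.univ x y

def IsContraction (Q : Matrix κ ι ℝ) : Prop :=
  ∀ x, (Q *ᵥ x) ⬝ᵥ (Q *ᵥ x) ≤ x ⬝ᵥ x

theorem mulVec_dotProduct_mulVec (Q : Matrix κ ι ℝ) (x y : ι → ℝ) :
    (Q *ᵥ x) ⬝ᵥ (Q *ᵥ y) = ((Qᵀ * Q) *ᵥ x) ⬝ᵥ y := by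
  rw [dotProduct_mulVec, ← mulVec_transpose, mulVec_mulVec]

theorem isContraction_of_isIdempotentElem {Q : Matrix κ ι ℝ}
    (hQ : IsIdempotentElem (Qᵀ * Q)) : IsContraction Q := by
  intro x
  set y := (Qᵀ * Q) *ᵥ x
  have hyx : y ⬝ᵥ y = y ⬝ᵥ x := by
    rw [← mulVec_dotProduct_mulVec, dotProduct_comm, mulVec_dotProduct_mulVec, mulVec_mulVec,
      hQ.eq]
  have hxy : 0 ≤ (x - y) ⬝ᵥ (x - y) := by simpa using dotProduct_self_star_nonneg (x - y)
  rw [mulVec_dotProduct_mulVec]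
  simp only [sub_dotProduct, dotProduct_sub, dotProduct_comm x y] at hxy
  linarith

end Contraction

namespace Matrix.IsHermitian

variable {ι : Type*} [Fintype ι] [DecidableEq ι] {S : Matrix ι ι ℝ} (hS : S.IsHermitian)

noncomputable def spectralSum (f : ι → ℝ) : Matrix ι ι ℝ :=
  ∑ i, f i • vecMulVec ⇑(hS.eigenvectorBasis i) ⇑(hS.eigenvectorBasis i)

theorem eigenvectorBasis_dotProduct (i j : ι) :
    ⇑(hS.eigenvectorBasis i) ⬝ᵥ ⇑(hS.eigenvectorBasis j) = if i = j then 1 else 0 := by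
  simpa [PiLp.inner_apply, dotProduct, mul_comm] using
    orthonormal_iff_ite.mp hS.eigenvectorBasis.orthonormal i j

theorem spectralSum_eq (f : ι → ℝ) :
    hS.spectralSum f =
      hS.eigenvectorUnitary * diagonal f * star (hS.eigenvectorUnitary : Matrix ι ι ℝ) := by
  ext k l
  simp only [spectralSum, sum_apply, smul_apply, vecMulVec_apply, smul_eq_mul, mul_apply,
    eigenvectorUnitary_apply, diagonal_apply, mul_ite, mul_zero, Finset.sum_ite_eq',
    Finset.mem_univ, if_true, star_apply, star_trivial]
  exact Finset.sum_congr rfl fun _ _ ↦ by ring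

theorem spectralSum_one : hS.spectralSum 1 = 1 := by
  rw [spectralSum_eq, Pi.one_def, diagonal_one, mul_one,
    Unitary.mul_star_self_of_mem hS.eigenvectorUnitary.2]

theorem spectralSum_eigenvalues : hS.spectralSum hS.eigenvalues = S := by
  conv_rhs => rw [← mul_one S, ← hS.spectralSum_one]
  simp only [spectralSum, Pi.one_apply, one_smul, Finset.mul_sum, mul_vecMulVec,
    hS.mulVec_eigenvectorBasis, smul_vecMulVec]

theorem spectralSum_mul_spectralSum (f g : ι → ℝ) :
    hS.spectralSum f * hS.spectralSum g = hS.spectralSum (f * g) := by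
  simp only [spectralSum, Finset.sum_mul, Finset.mul_sum, smul_mul_smul, vecMulVec_mul_vecMulVec,
    hS.eigenvectorBasis_dotProduct, ite_smul, one_smul, zero_smul]
  refine Finset.sum_congr rfl fun i _ ↦ ?_
  rw [Finset.sum_eq_single i (fun j _ hji ↦ by simp [hji]) (by simp)]
  simp

theorem mul_spectralSum (f : ι → ℝ) :
    S * hS.spectralSum f = hS.spectralSum (hS.eigenvalues * f) := by
  rw [← hS.spectralSum_mul_spectralSum, hS.spectralSum_eigenvalues]

theorem spectralSum_mul (f : ι → ℝ) :
    hS.spectralSum f * S = hS.spectralSum (f * hS.eigenvalues) := by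
  rw [← hS.spectralSum_mul_spectralSum, hS.spectralSum_eigenvalues]

theorem transpose_spectralSum (f : ι → ℝ) : (hS.spectralSum f)ᵀ = hS.spectralSum f := by
  simp [spectralSum, transpose_sum, transpose_vecMulVec]

theorem trace_spectralSum (f : ι → ℝ) : (hS.spectralSum f).trace = ∑ i, f i := by
  simp [spectralSum, trace_sum, trace_vecMulVec, hS.eigenvectorBasis_dotProduct]

end Matrix.IsHermitian

section NuclearNorm

variable {m n : ℕ}

local notation "𝒢" A:max => isHermitian_conjTranspose_mul_self A

theorem nucNorm_eq_sum_sqrt_eigenvalues (A : Matrix (Fin m) (Fin n) ℝ) :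
    nucNorm A = ∑ i, √((𝒢 A).eigenvalues i) := by
  rw [nucNorm, psdSqrt, ← (𝒢 A).trace_spectralSum, (𝒢 A).spectralSum_eq]
  rfl

theorem mulVec_eigenvectorBasis_dotProduct_self (A : Matrix (Fin m) (Fin n) ℝ) (i : Fin n) :
    (A *ᵥ ⇑((𝒢 A).eigenvectorBasis i)) ⬝ᵥ (A *ᵥ ⇑((𝒢 A).eigenvectorBasis i)) =
      (𝒢 A).eigenvalues i := by
  rw [mulVec_dotProduct_mulVec, ← conjTranspose_eq_transpose_of_trivial,
    (𝒢 A).mulVec_eigenvectorBasis, smul_dotProduct, (𝒢 A).eigenvectorBasis_dotProduct,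
    if_pos rfl, smul_eq_mul, mul_one]

theorem trace_transpose_mul_le_nucNorm {Q A : Matrix (Fin m) (Fin n) ℝ} (hQ : IsContraction Q) :
    (Qᵀ * A).trace ≤ nucNorm A := by
  set v : Fin n → Fin n → ℝ := fun i ↦ ⇑((𝒢 A).eigenvectorBasis i)
  have htrace : (Qᵀ * A).trace = ∑ i, (Q *ᵥ v i) ⬝ᵥ (A *ᵥ v i) := by
    rw [← mul_one (Qᵀ * A), ← (𝒢 A).spectralSum_one, IsHermitian.spectralSum,
      Finset.mul_sum, trace_sum]
    refine Finset.sum_congr rfl fun i _ ↦ ?_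
    rw [Pi.one_apply, one_smul, mul_vecMulVec, trace_vecMulVec, ← mulVec_mulVec, mulVec_transpose,
      ← dotProduct_mulVec, dotProduct_comm]
  rw [htrace, nucNorm_eq_sum_sqrt_eigenvalues]
  refine Finset.sum_le_sum fun i _ ↦ ?_
  have hv : (Q *ᵥ v i) ⬝ᵥ (Q *ᵥ v i) ≤ 1 :=
    (hQ (v i)).trans_eq (((𝒢 A).eigenvectorBasis_dotProduct i i).trans (if_pos rfl))
  calc (Q *ᵥ v i) ⬝ᵥ (A *ᵥ v i)
      ≤ √((Q *ᵥ v i) ⬝ᵥ (Q *ᵥ v i)) * √((A *ᵥ v i) ⬝ᵥ (A *ᵥ v i)) :=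
        dotProduct_le_sqrt_mul_sqrt _ _
    _ ≤ 1 * √((𝒢 A).eigenvalues i) := by
        rw [mulVec_eigenvectorBasis_dotProduct_self]
        gcongr
        exact Real.sqrt_le_one.mpr hv
    _ = √((𝒢 A).eigenvalues i) := one_mul _

-- As `(√0)⁻¹ = 0`, this is `A (Aᵀ A)^(-1/2)` on the row space of `A` and `0` on its complement.
noncomputable def polarFactor (A : Matrix (Fin m) (Fin n) ℝ) : Matrix (Fin m) (Fin n) ℝ :=
  A * (𝒢 A).spectralSum fun i ↦ (√((𝒢 A).eigenvalues i))⁻¹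

-- The weights `e⁻¹ * e` are `1` on nonzero eigenvalues and `0` on zero ones (as `0⁻¹ = 0`).
noncomputable def rowSpaceProj (A : Matrix (Fin m) (Fin n) ℝ) : Matrix (Fin n) (Fin n) ℝ :=
  (𝒢 A).spectralSum fun i ↦ ((𝒢 A).eigenvalues i)⁻¹ * (𝒢 A).eigenvalues i

theorem transpose_polarFactor_mul {k : ℕ} (A : Matrix (Fin m) (Fin n) ℝ)
    (B : Matrix (Fin m) (Fin k) ℝ) :
    (polarFactor A)ᵀ * B =
      (𝒢 A).spectralSum (fun i ↦ (√((𝒢 A).eigenvalues i))⁻¹) * (Aᵀ * B) := by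
  rw [polarFactor, transpose_mul, (𝒢 A).transpose_spectralSum, Matrix.mul_assoc]

theorem transpose_polarFactor_mul_polarFactor (A : Matrix (Fin m) (Fin n) ℝ) :
    (polarFactor A)ᵀ * polarFactor A = rowSpaceProj A := by
  rw [transpose_polarFactor_mul, polarFactor, ← Matrix.mul_assoc Aᵀ,
    ← conjTranspose_eq_transpose_of_trivial, ← Matrix.mul_assoc, (𝒢 A).spectralSum_mul,
    (𝒢 A).spectralSum_mul_spectralSum, rowSpaceProj]
  congr 1
  ext i
  simp only [Pi.mul_apply]
  have ha := eigenvalues_conjTranspose_mul_self_nonneg A i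
  generalize (𝒢 A).eigenvalues i = a at ha ⊢
  rw [inv_mul_eq_div, Real.div_sqrt]
  rcases ha.eq_or_lt with rfl | ha
  · simp
  · rw [mul_inv_cancel₀ (Real.sqrt_pos.mpr ha).ne', inv_mul_cancel₀ ha.ne']

theorem trace_transpose_polarFactor_mul_self (A : Matrix (Fin m) (Fin n) ℝ) :
    ((polarFactor A)ᵀ * A).trace = nucNorm A := by
  rw [transpose_polarFactor_mul, ← conjTranspose_eq_transpose_of_trivial,
    (𝒢 A).spectralSum_mul, (𝒢 A).trace_spectralSum, nucNorm_eq_sum_sqrt_eigenvalues]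
  exact Finset.sum_congr rfl fun i _ ↦ by rw [Pi.mul_apply, inv_mul_eq_div, Real.div_sqrt]

theorem isIdempotentElem_rowSpaceProj (A : Matrix (Fin m) (Fin n) ℝ) :
    IsIdempotentElem (rowSpaceProj A) := by
  rw [IsIdempotentElem, rowSpaceProj, (𝒢 A).spectralSum_mul_spectralSum]
  congr 1
  ext i
  rw [Pi.mul_apply]
  generalize (𝒢 A).eigenvalues i = a
  rcases eq_or_ne a 0 with h | h <;> simp [h]

theorem isContraction_polarFactor (A : Matrix (Fin m) (Fin n) ℝ) :
    IsContraction (polarFactor A) :=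
  isContraction_of_isIdempotentElem <|
    (transpose_polarFactor_mul_polarFactor A).symm ▸ isIdempotentElem_rowSpaceProj A

theorem rowSpaceProj_eq_spectralSum_mul (A : Matrix (Fin m) (Fin n) ℝ) :
    rowSpaceProj A = (𝒢 A).spectralSum (fun i ↦ ((𝒢 A).eigenvalues i)⁻¹) * (Aᵀ * A) := by
  rw [← conjTranspose_eq_transpose_of_trivial, (𝒢 A).spectralSum_mul, rowSpaceProj]
  rfl

theorem rowSpaceProj_eq_mul_spectralSum (A : Matrix (Fin m) (Fin n) ℝ) :
    rowSpaceProj A = (Aᵀ * A) * (𝒢 A).spectralSum (fun i ↦ ((𝒢 A).eigenvalues i)⁻¹) := by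
  rw [← conjTranspose_eq_transpose_of_trivial, (𝒢 A).mul_spectralSum, rowSpaceProj, mul_comm]
  rfl

theorem rowSpaceProj_mul_rowSpaceProj_of_mul_transpose_eq_zero {A B : Matrix (Fin m) (Fin n) ℝ}
    (h : A * Bᵀ = 0) : rowSpaceProj A * rowSpaceProj B = 0 := by
  rw [rowSpaceProj_eq_spectralSum_mul, rowSpaceProj_eq_mul_spectralSum, Matrix.mul_assoc,
    Matrix.mul_assoc Aᵀ, ← Matrix.mul_assoc A, ← Matrix.mul_assoc A, h]
  simp

theorem nucNorm_add_le (A B : Matrix (Fin m) (Fin n) ℝ) :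
    nucNorm (A + B) ≤ nucNorm A + nucNorm B := by
  have h := trace_transpose_polarFactor_mul_self (A + B)
  rw [Matrix.mul_add, trace_add] at h
  have hA := trace_transpose_mul_le_nucNorm (A := A) (isContraction_polarFactor (A + B))
  have hB := trace_transpose_mul_le_nucNorm (A := B) (isContraction_polarFactor (A + B))
  linarith

theorem nucNorm_neg (A : Matrix (Fin m) (Fin n) ℝ) : nucNorm (-A) = nucNorm A := by
  unfold nucNorm
  congr 2
  simp

theorem nucNorm_add_of_orthogonal {A B : Matrix (Fin m) (Fin n) ℝ} (h₁ : Aᵀ * B = 0)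
    (h₂ : A * Bᵀ = 0) : nucNorm (A + B) = nucNorm A + nucNorm B := by
  have h₁' : Bᵀ * A = 0 := by rw [← transpose_transpose A, ← transpose_mul, h₁, transpose_zero]
  have h₂' : B * Aᵀ = 0 := by rw [← transpose_transpose B, ← transpose_mul, h₂, transpose_zero]
  set Q := polarFactor A + polarFactor B
  have hQQ : Qᵀ * Q = rowSpaceProj A + rowSpaceProj B := by
    simp only [Q, transpose_add, Matrix.add_mul, Matrix.mul_add,
      transpose_polarFactor_mul_polarFactor]
    rw [transpose_polarFactor_mul, transpose_polarFactor_mul, polarFactor, polarFactor,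
      ← Matrix.mul_assoc Aᵀ, ← Matrix.mul_assoc Bᵀ, h₁, h₁']
    simp
  have hQ : IsContraction Q := by
    refine isContraction_of_isIdempotentElem ?_
    rw [hQQ, IsIdempotentElem, Matrix.add_mul, Matrix.mul_add, Matrix.mul_add,
      (isIdempotentElem_rowSpaceProj A).eq, (isIdempotentElem_rowSpaceProj B).eq,
      rowSpaceProj_mul_rowSpaceProj_of_mul_transpose_eq_zero h₂,
      rowSpaceProj_mul_rowSpaceProj_of_mul_transpose_eq_zero h₂', zero_add, add_zero]
  have htrace : (Qᵀ * (A + B)).trace = nucNorm A + nucNorm B := by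
    rw [transpose_add, Matrix.add_mul, Matrix.mul_add, Matrix.mul_add,
      transpose_polarFactor_mul A B, transpose_polarFactor_mul B A, h₁, h₁']
    simp [trace_transpose_polarFactor_mul_self]
  exact le_antisymm (nucNorm_add_le A B) (htrace ▸ trace_transpose_mul_le_nucNorm hQ)

theorem frobNorm_eq_sqrt_trace (A : Matrix (Fin m) (Fin n) ℝ) :
    frobNorm A = √((Aᵀ * A).trace) := by
  rw [frobNorm, trace, Finset.sum_comm]
  simp only [diag, mul_apply, transpose_apply, sq]

theorem nucNorm_le_sqrt_rank_mul_frobNorm (A : Matrix (Fin m) (Fin n) ℝ) :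
    nucNorm A ≤ √A.rank * frobNorm A := by
  set e := (𝒢 A).eigenvalues
  set s := Finset.univ.filter fun i ↦ e i ≠ 0
  have hcard : (s.card : ℝ) = A.rank := by
    rw [← rank_conjTranspose_mul_self, (𝒢 A).rank_eq_card_non_zero_eigs, Fintype.card_subtype]
  have htrace : (Aᵀ * A).trace = ∑ i, e i := by
    rw [← conjTranspose_eq_transpose_of_trivial, (𝒢 A).trace_eq_sum_eigenvalues]
    rfl
  have he : ∀ i, 0 ≤ e i := eigenvalues_conjTranspose_mul_self_nonneg A
  rw [nucNorm_eq_sum_sqrt_eigenvalues, frobNorm_eq_sqrt_trace, htrace, ← hcard]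
  calc ∑ i, √(e i) = ∑ i ∈ s, 1 * √(e i) := by
        simp only [one_mul, s]
        exact (Finset.sum_filter_of_ne fun i _ h ↦ (Real.sqrt_ne_zero'.mp h).ne').symm
    _ ≤ √(∑ i ∈ s, 1 ^ 2) * √(∑ i ∈ s, √(e i) ^ 2) :=
        Real.sum_mul_le_sqrt_mul_sqrt _ _ _
    _ ≤ √s.card * √(∑ i, e i) := by
        gcongr
        · simp
        · simp only [Real.sq_sqrt (he _)]
          exact Finset.sum_le_univ_sum_of_nonneg he

theorem frobNorm_le_frobNorm_add {G Z : Matrix (Fin m) (Fin n) ℝ} (h : (Zᵀ * G).trace = 0) :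
    frobNorm G ≤ frobNorm (G + Z) := by
  have h' : (Gᵀ * Z).trace = 0 := by
    rw [← trace_transpose, transpose_mul, transpose_transpose, h]
  have hZ : 0 ≤ (Zᵀ * Z).trace := by
    simpa [conjTranspose_eq_transpose_of_trivial] using
      (posSemidef_conjTranspose_mul_self Z).trace_nonneg
  rw [frobNorm_eq_sqrt_trace, frobNorm_eq_sqrt_trace]
  gcongr
  simp only [transpose_add, Matrix.add_mul, Matrix.mul_add, trace_add, h, h']
  linarith

theorem nucNorm_le_of_nucNorm_add_le {M G Z : Matrix (Fin m) (Fin n) ℝ} (h₁ : Mᵀ * Z = 0)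
    (h₂ : M * Zᵀ = 0) (h : nucNorm (M + (G + Z)) ≤ nucNorm M) : nucNorm Z ≤ nucNorm G := by
  have htri := nucNorm_add_le (M + (G + Z)) (-G)
  rw [nucNorm_neg, show M + (G + Z) + -G = M + Z by abel, nucNorm_add_of_orthogonal h₁ h₂]
    at htri
  linarith

theorem nucNorm_add_le_two_mul_sqrt_mul_frobNorm {G Z : Matrix (Fin m) (Fin n) ℝ} {t : ℝ}
    (hcone : nucNorm Z ≤ nucNorm G) (horth : (Zᵀ * G).trace = 0)
    (hrank : (G.rank : ℝ) ≤ t) :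
    nucNorm (G + Z) ≤ 2 * √t * frobNorm (G + Z) :=
  calc nucNorm (G + Z) ≤ 2 * nucNorm G := by linarith [nucNorm_add_le G Z]
    _ ≤ 2 * (√G.rank * frobNorm G) := by gcongr; exact nucNorm_le_sqrt_rank_mul_frobNorm G
    _ ≤ 2 * (√t * frobNorm (G + Z)) := by
        gcongr
        · exact Real.sqrt_nonneg _
        · exact frobNorm_le_frobNorm_add horth
    _ = 2 * √t * frobNorm (G + Z) := by ring

end NuclearNorm

section TangentSpace

variable {μ ι κ κ' : Type*}

theorem exists_eq_mul_of_range_mulVecLin_le {R : Type*} [CommSemiring R] [Fintype ι] [Fintype κ]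
    [DecidableEq ι] {M : Matrix μ ι R} {U : Matrix μ κ R}
    (h : LinearMap.range M.mulVecLin ≤ LinearMap.range U.mulVecLin) :
    ∃ C : Matrix κ ι R, M = U * C := by
  choose c hc using fun j ↦ h ⟨Pi.single j 1, rfl⟩
  refine ⟨(of c)ᵀ, ?_⟩
  ext i j
  simpa [mulVec, dotProduct, mul_apply, Pi.single_apply] using (congrFun (hc j) i).symm

theorem transpose_mul_eq_zero_of_range_mulVecLin_le {R : Type*} [CommSemiring R] [Fintype μ]
    [Fintype ι] [Fintype κ] [DecidableEq ι] {M : Matrix μ ι R} {U : Matrix μ κ R}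
    {Z : Matrix μ κ' R} (h : LinearMap.range M.mulVecLin ≤ LinearMap.range U.mulVecLin)
    (hUZ : Uᵀ * Z = 0) : Mᵀ * Z = 0 := by
  obtain ⟨C, rfl⟩ := exists_eq_mul_of_range_mulVecLin_le h
  rw [transpose_mul, Matrix.mul_assoc, hUZ, Matrix.mul_zero]

theorem transpose_mul_eq_zero_of_forall_trace_eq_zero [Fintype μ] [Fintype ι] [Fintype κ]
    {Z : Matrix μ ι ℝ} {U : Matrix μ κ ℝ}
    (h : ∀ A : Matrix κ ι ℝ, (Zᵀ * (U * A)).trace = 0) :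
    Uᵀ * Z = 0 :=
  trace_conjTranspose_mul_self_eq_zero_iff.mp <| by
    simpa [conjTranspose_eq_transpose_of_trivial, Matrix.mul_assoc] using h (Uᵀ * Z)

theorem mul_eq_zero_of_forall_trace_eq_zero [Fintype μ] [Fintype ι] [Fintype κ]
    {Z : Matrix μ ι ℝ} {V : Matrix ι κ ℝ}
    (h : ∀ B : Matrix μ κ ℝ, (Zᵀ * (B * Vᵀ)).trace = 0) :
    Z * V = 0 :=
  trace_conjTranspose_mul_self_eq_zero_iff.mp <| by
    rw [conjTranspose_eq_transpose_of_trivial, transpose_mul, Matrix.mul_assoc, trace_mul_comm,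
      Matrix.mul_assoc]
    exact h (Z * V)

theorem exists_eq_mul_add_mul_of_mem_span {R : Type*} [CommSemiring R] [Fintype κ] [Fintype κ']
    {U : Matrix μ κ R} {V : Matrix ι κ' R} {G : Matrix μ ι R}
    (hG : G ∈ Submodule.span R
      {Z | (∃ A : Matrix κ ι R, Z = U * A) ∨ ∃ B : Matrix μ κ' R, Z = B * Vᵀ}) :
    ∃ (A : Matrix κ ι R) (B : Matrix μ κ' R), G = U * A + B * Vᵀ := by
  induction hG using Submodule.span_induction with
  | mem Z hZ =>
    rcases hZ with ⟨A, rfl⟩ | ⟨B, rfl⟩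
    · exact ⟨A, 0, by simp⟩
    · exact ⟨0, B, by simp⟩
  | zero => exact ⟨0, 0, by simp⟩
  | add X Y _ _ hX hY =>
    obtain ⟨A, B, rfl⟩ := hX
    obtain ⟨A', B', rfl⟩ := hY
    exact ⟨A + A', B + B', by simp only [Matrix.mul_add, Matrix.add_mul]; abel⟩
  | smul c X _ hX =>
    obtain ⟨A, B, rfl⟩ := hX
    exact ⟨c • A, c • B, by simp [smul_add]⟩

theorem rank_mul_add_mul_le {R : Type*} [CommRing R] [StrongRankCondition R] [Fintype ι]
    [Fintype κ] [Fintype κ'] (U : Matrix μ κ R) (A : Matrix κ ι R) (B : Matrix μ κ' R)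
    (C : Matrix κ' ι R) : (U * A + B * C).rank ≤ Fintype.card κ + Fintype.card κ' := by
  rw [← fromCols_mul_fromRows, ← Fintype.card_sum]
  exact (rank_mul_le_left _ _).trans (rank_le_card_width _)

end TangentSpace

theorem stmt18_general (m n r : ℕ) (M : Matrix (Fin m) (Fin n) ℝ)
    (U : Matrix (Fin m) (Fin r) ℝ) (V : Matrix (Fin n) (Fin r) ℝ)
    (hUrange : LinearMap.range U.mulVecLin = LinearMap.range M.mulVecLin)
    (hVrange : LinearMap.range V.mulVecLin = LinearMap.range Mᵀ.mulVecLin)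
    (T : Submodule ℝ (Matrix (Fin m) (Fin n) ℝ))
    (hT : T = Submodule.span ℝ {Z | (∃ A : Matrix (Fin r) (Fin n) ℝ, Z = U * A) ∨
      (∃ B : Matrix (Fin m) (Fin r) ℝ, Z = B * Vᵀ)})
    (PT PTperp : Matrix (Fin m) (Fin n) ℝ → Matrix (Fin m) (Fin n) ℝ)
    (hPT_mem : ∀ H, PT H ∈ T)
    (hPT_orth : ∀ H, ∀ W ∈ T, ((H - PT H)ᵀ * W).trace = 0)
    (hPTperp : ∀ H, PTperp H = H - PT H)
    (H : Matrix (Fin m) (Fin n) ℝ) (hH : nucNorm (M + H) ≤ nucNorm M) :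
    nucNorm (PTperp H) ≤ nucNorm (PT H) ∧
      nucNorm H ≤ 2 * Real.sqrt (2 * r) * frobNorm H := by
  set G := PT H
  have hZT : ∀ W ∈ T, ((H - G)ᵀ * W).trace = 0 := hPT_orth H
  have hUZ : Uᵀ * (H - G) = 0 := transpose_mul_eq_zero_of_forall_trace_eq_zero fun A ↦
    hZT _ (hT ▸ Submodule.subset_span (Or.inl ⟨A, rfl⟩))
  have hZV : (H - G) * V = 0 := mul_eq_zero_of_forall_trace_eq_zero fun B ↦
    hZT _ (hT ▸ Submodule.subset_span (Or.inr ⟨B, rfl⟩))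
  have hMZ : Mᵀ * (H - G) = 0 := transpose_mul_eq_zero_of_range_mulVecLin_le hUrange.ge hUZ
  have hMZ' : M * (H - G)ᵀ = 0 := by
    simpa only [transpose_transpose] using transpose_mul_eq_zero_of_range_mulVecLin_le
      (Z := (H - G)ᵀ) hVrange.ge (by rw [← transpose_mul, hZV, transpose_zero])
  have hcone : nucNorm (H - G) ≤ nucNorm G :=
    nucNorm_le_of_nucNorm_add_le hMZ hMZ' (by rwa [add_sub_cancel])
  have hrank : (G.rank : ℝ) ≤ 2 * r := by
    obtain ⟨A, B, hAB⟩ := exists_eq_mul_add_mul_of_mem_span (hT ▸ hPT_mem H)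
    have := hAB ▸ rank_mul_add_mul_le U A B Vᵀ
    rw [Fintype.card_fin, ← two_mul] at this
    exact_mod_cast this
  refine ⟨hPTperp H ▸ hcone, ?_⟩
  simpa only [add_sub_cancel] using
    nucNorm_add_le_two_mul_sqrt_mul_frobNorm hcone (hZT G (hPT_mem H)) hrank

theorem stmt18 (m n r : ℕ) (M : Matrix (Fin m) (Fin n) ℝ) (hrank : M.rank = r)
    (U : Matrix (Fin m) (Fin r) ℝ) (V : Matrix (Fin n) (Fin r) ℝ)
    (hU : Uᵀ * U = 1) (hV : Vᵀ * V = 1)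
    (hUrange : LinearMap.range U.mulVecLin = LinearMap.range M.mulVecLin)
    (hVrange : LinearMap.range V.mulVecLin = LinearMap.range Mᵀ.mulVecLin)
    (T : Submodule ℝ (Matrix (Fin m) (Fin n) ℝ))
    (hT : T = Submodule.span ℝ {Z | (∃ A : Matrix (Fin r) (Fin n) ℝ, Z = U * A) ∨
      (∃ B : Matrix (Fin m) (Fin r) ℝ, Z = B * Vᵀ)})
    (PT PTperp : Matrix (Fin m) (Fin n) ℝ → Matrix (Fin m) (Fin n) ℝ)
    (hPT_mem : ∀ H, PT H ∈ T)
    (hPT_orth : ∀ H, ∀ W ∈ T, ((H - PT H)ᵀ * W).trace = 0)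
    (hPTperp : ∀ H, PTperp H = H - PT H)
    (H : Matrix (Fin m) (Fin n) ℝ) (hH : nucNorm (M + H) ≤ nucNorm M) :
    nucNorm (PTperp H) ≤ nucNorm (PT H) ∧
      nucNorm H ≤ 2 * Real.sqrt (2 * r) * frobNorm H :=
  stmt18_general m n r M U V hUrange hVrange T hT PT PTperp hPT_mem hPT_orth hPTperp H hH
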